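/- (Deshpande) For every natural number n ≥ 3, there exist n dice with n faces each that form an intransitive cycle: there is a family d : Fin n → (Fin n → ℕ) such that for every i, the die d i beats the die d (i+1) (indices taken modulo n), where a die x beats a die y iff twice the number of pairs (a,b) ∈ Fin n × Fin n with x a > y b strictly exceeds n². -/
import Mathlib


/-- An `n`-sided die `x` beats an `n`-sided die `y` if `x` rolls strictly higher
than `y` in more than half of the `n²` equally likely outcomes. -/
def Beats (n : ℕ) (x y : Fin n → ℕ) : Prop :=
  n ^ 2 < 2 * (Finset.univ.filter (fun p : Fin n × Fin n => x p.1 > y p.2)).card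

theorem deshpande_intransitive_dice :
    ∀ n : ℕ, ∀ hn : 3 ≤ n,
      ∃ d : Fin n → (Fin n → ℕ),
        ∀ i : Fin n,
          Beats n (d i) (d ⟨((i : ℕ) + 1) % n, Nat.mod_lt _ (by omega)⟩) := by
  intro n hn
  refine ⟨fun i j => n * j.val + ((j.val + n - i.val) % n), fun i => ?_⟩
  set i' : Fin n := ⟨((i : ℕ) + 1) % n, Nat.mod_lt _ (by omega)⟩ with hi'
  have hi'v : i'.val = if i.val + 1 = n then 0 else i.val + 1 := by
    simp only [hi']
    split
    · simp_all
    · exact Nat.mod_eq_of_lt (by omega)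
  unfold Beats
  have hmod : ∀ k m : ℕ, k < n → m < n →
      (k + n - m) % n = if k < m then k + n - m else k - m := by
    intro k m hk hm
    split
    · exact Nat.mod_eq_of_lt (by omega)
    · have h : k + n - m = (k - m) + n := by omega
      rw [h, Nat.add_mod_right, Nat.mod_eq_of_lt (by omega)]
  have hkey : ∀ a b : Fin n,
      (n * b.val + ((b.val + n - i'.val) % n) < n * a.val + ((a.val + n - i.val) % n))
      ↔ (b < a ∨ (b = a ∧ a ≠ i)) := by
    intro a b
    have ha := a.isLt
    have hb := b.isLt
    have hi := i.isLt
    rw [hmod a.val i.val ha hi, hmod b.val i'.val hb i'.isLt,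
      Fin.lt_def, Fin.ext_iff, ne_eq, Fin.ext_iff, hi'v]
    have hmul : b.val < a.val → n * b.val + n ≤ n * a.val := by
      intro h
      calc n * b.val + n = n * (b.val + 1) := by ring
        _ ≤ n * a.val := Nat.mul_le_mul_left n h
    have hmul' : a.val < b.val → n * a.val + n ≤ n * b.val := by
      intro h
      calc n * a.val + n = n * (a.val + 1) := by ring
        _ ≤ n * b.val := Nat.mul_le_mul_left n h
    rcases lt_trichotomy a.val b.val with h | h | h
    · have := hmul' h
      split_ifs <;> omega
    · have hab : n * a.val = n * b.val := by rw [h]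
      split_ifs <;> omega
    · have := hmul h
      split_ifs <;> omega
  have hfilter : (Finset.univ.filter
        (fun p : Fin n × Fin n =>
          (fun j : Fin n => n * j.val + ((j.val + n - i.val) % n)) p.1 >
          (fun j : Fin n => n * j.val + ((j.val + n - i'.val) % n)) p.2)) =
      Finset.univ.filter (fun p : Fin n × Fin n => p.2 < p.1 ∨ (p.2 = p.1 ∧ p.1 ≠ i)) := by
    ext ⟨a, b⟩
    simp only [Finset.mem_filter, Finset.mem_univ, true_and, gt_iff_lt]
    exact hkey a b
  rw [hfilter, Finset.card_filter, ← Finset.univ_product_univ, Finset.sum_product]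
  have hinner : ∀ a : Fin n,
      (∑ b : Fin n, if (b < a ∨ (b = a ∧ a ≠ i)) then (1:ℕ) else 0) =
        a.val + (if a = i then 0 else 1) := by
    intro a
    by_cases h : a = i
    · simp only [h, ne_eq, not_true_eq_false, and_false, or_false, if_pos rfl]
      rw [← Finset.card_filter]
      have : Finset.univ.filter (fun b : Fin n => b < i) = Finset.Iio i := by
        ext; simp
      rw [this, Fin.card_Iio]
      simp
    · simp only [h, ne_eq, not_false_eq_true, and_true, if_neg h]
      have hcond : ∀ b : Fin n, (b < a ∨ b = a) ↔ b ≤ a := by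
        intro b; rw [le_iff_lt_or_eq]
      simp only [hcond]
      rw [← Finset.card_filter]
      have : Finset.univ.filter (fun b : Fin n => b ≤ a) = Finset.Iic a := by
        ext; simp
      rw [this, Fin.card_Iic]
      simp
  simp only [hinner]
  rw [Finset.sum_add_distrib]
  have h1 : (∑ a : Fin n, (a : ℕ)) * 2 = n * (n - 1) := by
    rw [Fin.sum_univ_eq_sum_range (fun x => x) n]
    exact Finset.sum_range_id_mul_two n
  have h2 : (∑ a : Fin n, if a = i then (0:ℕ) else 1) = n - 1 := by
    rw [Finset.sum_ite, Finset.sum_const, Finset.sum_const, smul_eq_mul, smul_eq_mul,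
      mul_zero, mul_one, zero_add, Finset.filter_ne', Finset.card_erase_of_mem
        (Finset.mem_univ i), Finset.card_univ, Fintype.card_fin]
  rw [h2]
  have heq : n ^ 2 = n * (n - 1) + n := by
    rcases n with _ | m
    · simp
    · simp only [Nat.add_sub_cancel]
      ring
  have hm : n - 1 + 1 = n := by omega
  linarith [h1, heq, hm]
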